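/- Let B ⊆ P be a coalgebra-Galois C-extension. Then there exists a unique entwining structure (P, C, ψ) such that P is an entwined module in M_P^C(ψ) with the right P-module structure given by multiplication and the given coaction Δ_P; the entwining map is given by ψ(c ⊗ p) = can(τ(c) · p), where τ is the translation map. -/

import Mathlib

/-!
STATEMENT 11. For a coalgebra-Galois C-extension B ⊆ P, there is a unique
entwining structure (P, C, ψ) making P an entwined module in M_P^C(ψ) (with
P-action the multiplication); ψ is given by ψ(c ⊗ p) = can(τ(c) · p).
-/

open TensorProduct LinearMap

noncomputable section

namespace CGal

variable {k : Type*} [Field k]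
variable {P C : Type*} [Ring P] [Algebra k P]
  [AddCommGroup C] [Module k C] [Coalgebra k C]

/-- The coaction invariants `P^{coC}`. -/
def coinv (δ : P →ₗ[k] P ⊗[k] C) : Set P :=
  {b : P | ∀ p : P, δ (b * p) = b • δ p}

/-- `δ` is a (counital, coassociative) right `C`-coaction on `P`. -/
def IsCoaction (δ : P →ₗ[k] P ⊗[k] C) : Prop :=
  (∀ p : P, (TensorProduct.rid k P) ((lTensor P (Coalgebra.counit : C →ₗ[k] k)) (δ p)) = p) ∧
  (∀ p : P, (rTensor C δ) (δ p)
      = (TensorProduct.assoc k P C C).symm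
          ((lTensor P (Coalgebra.comul : C →ₗ[k] C ⊗[k] C)) (δ p)))

/-- The kernel of `P ⊗ P → P ⊗_B P` for `B = P^{coC}`. -/
def galRel (δ : P →ₗ[k] P ⊗[k] C) : Submodule k (P ⊗[k] P) :=
  Submodule.span k
    {x | ∃ p b p', b ∈ coinv δ ∧ x = (p * b) ⊗ₜ[k] p' - p ⊗ₜ[k] (b * p')}

/-- The lifted canonical map `~can : P ⊗ P → P ⊗ C`. -/
def canLift (δ : P →ₗ[k] P ⊗[k] C) : P ⊗[k] P →ₗ[k] P ⊗[k] C :=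
  (TensorProduct.map (LinearMap.mul' k P) LinearMap.id)
    ∘ₗ (TensorProduct.assoc k P P C).symm.toLinearMap
    ∘ₗ (lTensor P δ)

/-- The extension `P^{coC} ⊆ P` is coalgebra-Galois. -/
def IsCGalois (δ : P →ₗ[k] P ⊗[k] C) : Prop :=
  Function.Surjective (canLift δ) ∧ LinearMap.ker (canLift δ) = galRel δ

/-- The bow-tie axioms of an entwining structure `(P, C, ψ)`. -/
def IsEntwining (ψ : C ⊗[k] P →ₗ[k] P ⊗[k] C) : Prop :=
  (ψ ∘ₗ (lTensor C (LinearMap.mul' k P))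
     = (rTensor C (LinearMap.mul' k P))
        ∘ₗ (TensorProduct.assoc k P P C).symm.toLinearMap
        ∘ₗ (lTensor P ψ)
        ∘ₗ (TensorProduct.assoc k P C P).toLinearMap
        ∘ₗ (rTensor P ψ)
        ∘ₗ (TensorProduct.assoc k C P P).symm.toLinearMap) ∧
  (∀ c : C, ψ (c ⊗ₜ[k] (1 : P)) = (1 : P) ⊗ₜ[k] c) ∧
  ((lTensor P (Coalgebra.comul : C →ₗ[k] C ⊗[k] C)) ∘ₗ ψ
     = (TensorProduct.assoc k P C C).toLinearMap
        ∘ₗ (rTensor C ψ)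
        ∘ₗ (TensorProduct.assoc k C P C).symm.toLinearMap
        ∘ₗ (lTensor C ψ)
        ∘ₗ (TensorProduct.assoc k C C P).toLinearMap
        ∘ₗ (rTensor P (Coalgebra.comul : C →ₗ[k] C ⊗[k] C))) ∧
  ((TensorProduct.rid k P).toLinearMap
      ∘ₗ (lTensor P (Coalgebra.counit : C →ₗ[k] k)) ∘ₗ ψ
     = (TensorProduct.lid k P).toLinearMap
      ∘ₗ (rTensor P (Coalgebra.counit : C →ₗ[k] k)))

/-- `P` (with action the multiplication and coaction `δ`) is an entwined
module for `(P, C, ψ)`: `δ(mp) = m₍₀₎ ψ(m₍₁₎ ⊗ p)`. -/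
def IsEntwinedOn (δ : P →ₗ[k] P ⊗[k] C) (ψ : C ⊗[k] P →ₗ[k] P ⊗[k] C) : Prop :=
  ∀ m p : P,
    δ (m * p)
      = ((rTensor C (LinearMap.mul' k P))
          ∘ₗ (TensorProduct.assoc k P P C).symm.toLinearMap
          ∘ₗ (lTensor P ψ)
          ∘ₗ (TensorProduct.assoc k P C P).toLinearMap)
        ((δ m) ⊗ₜ[k] p)

end CGal

/-!
Transport the right `P`-module structure of `P ⊗_B P` along `can` to a right action `ρ` of `P`
on `P ⊗ C`: it is characterised by `ρ (can t ⊗ p) = can (t (1 ⊗ p))`, and it exists because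
`ker can = galRel` is stable under right multiplication by `1 ⊗ p`. Put
`ψ (c ⊗ p) := ρ ((1 ⊗ c) ⊗ p)`. As `can` is surjective and all maps involved are left `P`-linear,
identities need only be checked on the elements `a • δ b = can (a ⊗ b)`, on which `ρ` acts by
`p ↦ a • δ (b p)`; there the entwining axioms reduce to associativity and unitality of `P` and to
counitality and coassociativity of `δ`. Conversely, if `P` is entwined for some `ψ'`, then
`(x ⊗ c) ⊗ p ↦ x ψ' (c ⊗ p)` satisfies the same characterisation, so it is `ρ`, and `ψ'` is
recovered from it as `ψ` is from `ρ`.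
-/

namespace CGal

section Generic

variable {R A D M : Type*} [CommSemiring R] [Semiring A] [Algebra R A]
  [AddCommMonoid D] [Module R D] [AddCommMonoid M] [Module R M]

/-- `(m ⊗ c) ⊗ p ↦ m · p_α ⊗ c^α`, where `ψ (c ⊗ p) = p_α ⊗ c^α` and `·` is `μ`. -/
def entwinedAction (μ : M ⊗[R] A →ₗ[R] M) (ψ : D ⊗[R] A →ₗ[R] A ⊗[R] D) :
    (M ⊗[R] D) ⊗[R] A →ₗ[R] M ⊗[R] D :=
  rTensor D μ ∘ₗ (TensorProduct.assoc R M A D).symm.toLinearMap ∘ₗ lTensor M ψ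
    ∘ₗ (TensorProduct.assoc R M D A).toLinearMap

theorem entwinedAction_tmul (μ : M ⊗[R] A →ₗ[R] M) (ψ : D ⊗[R] A →ₗ[R] A ⊗[R] D)
    (m : M) (c : D) (p : A) :
    entwinedAction μ ψ ((m ⊗ₜ c) ⊗ₜ p)
      = rTensor D μ ((TensorProduct.assoc R M A D).symm (m ⊗ₜ ψ (c ⊗ₜ p))) :=
  rfl

theorem entwinedAction_smul [Module A M] [SMulCommClass R A M] {μ : M ⊗[R] A →ₗ[R] M}
    (hμ : ∀ (x : A) (m : M) (p : A), μ ((x • m) ⊗ₜ p) = x • μ (m ⊗ₜ p))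
    (ψ : D ⊗[R] A →ₗ[R] A ⊗[R] D) (x : A) (U : M ⊗[R] D) (p : A) :
    entwinedAction μ ψ ((x • U) ⊗ₜ p) = x • entwinedAction μ ψ (U ⊗ₜ p) := by
  induction U using TensorProduct.induction_on with
  | zero => simp
  | add U V hU hV => simp only [smul_add, add_tmul, map_add, hU, hV]
  | tmul m c =>
    rw [smul_tmul', entwinedAction_tmul, entwinedAction_tmul]
    induction ψ (c ⊗ₜ p) using TensorProduct.induction_on with
    | zero => simp
    | add v w hv hw => simp only [tmul_add, map_add, smul_add, hv, hw]
    | tmul q d => simp [hμ, smul_tmul']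

theorem rTensor_mul'_assoc_symm (x : A) (w : A ⊗[R] D) :
    rTensor D (mul' R A) ((TensorProduct.assoc R A A D).symm (x ⊗ₜ w)) = x • w := by
  induction w using TensorProduct.induction_on with
  | zero => simp
  | add v w hv hw => simp only [tmul_add, map_add, smul_add, hv, hw]
  | tmul q d => simp [smul_tmul']

theorem entwinedAction_mul'_tmul (ψ : D ⊗[R] A →ₗ[R] A ⊗[R] D) (x : A) (c : D) (p : A) :
    entwinedAction (mul' R A) ψ ((x ⊗ₜ c) ⊗ₜ p) = x • ψ (c ⊗ₜ p) :=
  rTensor_mul'_assoc_symm x _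

theorem entwinedAction_mul'_smul (ψ : D ⊗[R] A →ₗ[R] A ⊗[R] D) (x : A) (u : A ⊗[R] D) (p : A) :
    entwinedAction (mul' R A) ψ ((x • u) ⊗ₜ p) = x • entwinedAction (mul' R A) ψ (u ⊗ₜ p) :=
  entwinedAction_smul (fun x m p => by simp [mul_assoc]) ψ x u p

def entwiningOf (ρ : (A ⊗[R] D) ⊗[R] A →ₗ[R] A ⊗[R] D) : D ⊗[R] A →ₗ[R] A ⊗[R] D :=
  ρ ∘ₗ rTensor A (TensorProduct.mk R A D 1)

theorem entwiningOf_tmul (ρ : (A ⊗[R] D) ⊗[R] A →ₗ[R] A ⊗[R] D) (c : D) (p : A) :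
    entwiningOf ρ (c ⊗ₜ p) = ρ ((1 ⊗ₜ c) ⊗ₜ p) :=
  rfl

theorem entwiningOf_entwinedAction (ψ : D ⊗[R] A →ₗ[R] A ⊗[R] D) :
    entwiningOf (entwinedAction (mul' R A) ψ) = ψ :=
  TensorProduct.ext' fun c p => by rw [entwiningOf_tmul, entwinedAction_mul'_tmul, one_smul]

theorem rid_lTensor_smul (f : D →ₗ[R] R) (x : A) (u : A ⊗[R] D) :
    TensorProduct.rid R A (lTensor A f (x • u)) = x * TensorProduct.rid R A (lTensor A f u) := by
  induction u using TensorProduct.induction_on with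
  | zero => simp
  | add u v hu hv => simp only [smul_add, map_add, mul_add, hu, hv]
  | tmul a c => simp [smul_tmul']

theorem assoc_symm_lTensor_smul {E N : Type*} [AddCommMonoid E] [Module R E] [AddCommMonoid N]
    [Module R N] (f : N →ₗ[R] D ⊗[R] E) (x : A) (u : A ⊗[R] N) :
    (TensorProduct.assoc R A D E).symm (lTensor A f (x • u))
      = x • (TensorProduct.assoc R A D E).symm (lTensor A f u) := by
  induction u using TensorProduct.induction_on with
  | zero => simp
  | add u v hu hv => simp only [smul_add, map_add, hu, hv]
  | tmul a n =>
    rw [smul_tmul', lTensor_tmul, lTensor_tmul]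
    induction f n using TensorProduct.induction_on with
    | zero => simp
    | add v w hv hw => simp only [tmul_add, map_add, smul_add, hv, hw]
    | tmul c e => simp [smul_tmul']

end Generic

variable {k : Type*} [Field k]
variable {P C : Type*} [Ring P] [Algebra k P] [AddCommGroup C] [Module k C]

theorem isEntwinedOn_iff {δ : P →ₗ[k] P ⊗[k] C} {ψ : C ⊗[k] P →ₗ[k] P ⊗[k] C} :
    IsEntwinedOn δ ψ ↔ ∀ m p : P, δ (m * p) = entwinedAction (mul' k P) ψ (δ m ⊗ₜ p) :=
  Iff.rfl

theorem canLift_tmul (δ : P →ₗ[k] P ⊗[k] C) (a b : P) : canLift δ (a ⊗ₜ b) = a • δ b :=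
  rTensor_mul'_assoc_symm a (δ b)

theorem canLift_induction {δ : P →ₗ[k] P ⊗[k] C} (hs : Function.Surjective (canLift δ))
    {motive : P ⊗[k] C → Prop} (zero : motive 0)
    (add : ∀ u v, motive u → motive v → motive (u + v))
    (smul_delta : ∀ a b : P, motive (a • δ b)) (u : P ⊗[k] C) : motive u := by
  obtain ⟨t, rfl⟩ := hs u
  induction t using TensorProduct.induction_on with
  | zero => simpa using zero
  | add s t hs ht => simpa using add _ _ hs ht
  | tmul a b => simpa [canLift_tmul] using smul_delta a b

theorem mul_one_tmul_mem_galRel {δ : P →ₗ[k] P ⊗[k] C} {x : P ⊗[k] P} (hx : x ∈ galRel δ)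
    (p : P) : x * (1 ⊗ₜ p) ∈ galRel δ := by
  induction hx using Submodule.span_induction with
  | mem x hx =>
    obtain ⟨q, b, p', hb, rfl⟩ := hx
    exact Submodule.subset_span ⟨q, b, p' * p, hb, by simp [sub_mul, mul_assoc]⟩
  | zero => simp
  | add x y _ _ hx hy => simpa [add_mul] using add_mem hx hy
  | smul c x _ hx => simpa [smul_mul_assoc] using Submodule.smul_mem _ c hx

/-- `ρ` is the right action of `P` on `P ⊗ C ≅ P ⊗_B P` transported along `can`. -/
def IsCanAction (δ : P →ₗ[k] P ⊗[k] C) (ρ : (P ⊗[k] C) ⊗[k] P →ₗ[k] P ⊗[k] C) : Prop :=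
  ∀ (t : P ⊗[k] P) (p : P), ρ (canLift δ t ⊗ₜ p) = canLift δ (t * (1 ⊗ₜ p))

theorem exists_isCanAction {δ : P →ₗ[k] P ⊗[k] C} (hGal : IsCGalois δ) :
    ∃ ρ, IsCanAction δ ρ := by
  obtain ⟨s, hs⟩ := (canLift δ).exists_rightInverse_of_surjective (range_eq_top.2 hGal.1)
  -- `ρ (u ⊗ p) := can (s u * (1 ⊗ p))` for a linear section `s` of `can`
  refine ⟨TensorProduct.lift
    ((((LinearMap.mul k (P ⊗[k] P)).compl₂ (TensorProduct.mk k P P 1)) ∘ₗ s).compr₂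
      (canLift δ)), fun t p => ?_⟩
  have hker : s (canLift δ t) - t ∈ galRel δ := by
    rw [← hGal.2, mem_ker, map_sub, ← comp_apply, hs, id_apply, sub_self]
  have hmem := mul_one_tmul_mem_galRel hker p
  rw [← hGal.2, mem_ker, sub_mul, map_sub, sub_eq_zero] at hmem
  simpa using hmem

theorem isCanAction_entwinedAction {δ : P →ₗ[k] P ⊗[k] C} {ψ : C ⊗[k] P →ₗ[k] P ⊗[k] C}
    (h : IsEntwinedOn δ ψ) : IsCanAction δ (entwinedAction (mul' k P) ψ) := by
  intro t p
  induction t using TensorProduct.induction_on with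
  | zero => simp
  | add s t hs ht => simp only [add_mul, map_add, add_tmul, hs, ht]
  | tmul a b =>
    rw [canLift_tmul, entwinedAction_mul'_smul, ← isEntwinedOn_iff.1 h,
      Algebra.TensorProduct.tmul_mul_tmul, mul_one, canLift_tmul]

namespace IsCanAction

variable {δ : P →ₗ[k] P ⊗[k] C} {ρ : (P ⊗[k] C) ⊗[k] P →ₗ[k] P ⊗[k] C}

theorem apply_smul_delta (h : IsCanAction δ ρ) (a b p : P) :
    ρ ((a • δ b) ⊗ₜ p) = a • δ (b * p) := by
  simpa [canLift_tmul] using h (a ⊗ₜ b) p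

theorem apply_delta (h : IsCanAction δ ρ) (b p : P) : ρ (δ b ⊗ₜ p) = δ (b * p) := by
  simpa using h.apply_smul_delta 1 b p

theorem unique (hs : Function.Surjective (canLift δ)) {ρ' : (P ⊗[k] C) ⊗[k] P →ₗ[k] P ⊗[k] C}
    (h : IsCanAction δ ρ) (h' : IsCanAction δ ρ') : ρ = ρ' := by
  refine TensorProduct.ext' fun u p => ?_
  obtain ⟨t, rfl⟩ := hs u
  rw [h, h']

theorem apply_smul (hs : Function.Surjective (canLift δ)) (h : IsCanAction δ ρ) (x : P)
    (u : P ⊗[k] C) (p : P) : ρ ((x • u) ⊗ₜ p) = x • ρ (u ⊗ₜ p) := by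
  induction u using canLift_induction hs with
  | zero => simp
  | add u v hu hv => simp only [smul_add, add_tmul, map_add, hu, hv]
  | smul_delta a b => rw [smul_smul, h.apply_smul_delta, h.apply_smul_delta, mul_smul]

theorem apply_tmul_one (hs : Function.Surjective (canLift δ)) (h : IsCanAction δ ρ)
    (u : P ⊗[k] C) : ρ (u ⊗ₜ 1) = u := by
  induction u using canLift_induction hs with
  | zero => simp
  | add u v hu hv => simp only [add_tmul, map_add, hu, hv]
  | smul_delta a b => rw [h.apply_smul_delta, mul_one]

theorem apply_tmul_mul (hs : Function.Surjective (canLift δ)) (h : IsCanAction δ ρ)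
    (u : P ⊗[k] C) (p p' : P) : ρ (u ⊗ₜ (p * p')) = ρ (ρ (u ⊗ₜ p) ⊗ₜ p') := by
  induction u using canLift_induction hs with
  | zero => simp
  | add u v hu hv => simp only [add_tmul, map_add, hu, hv]
  | smul_delta a b =>
    rw [h.apply_smul_delta, h.apply_smul_delta, h.apply_smul_delta, mul_assoc]

theorem apply_tmul_tmul (hs : Function.Surjective (canLift δ)) (h : IsCanAction δ ρ) (x : P)
    (c : C) (p : P) : ρ ((x ⊗ₜ c) ⊗ₜ p) = x • entwiningOf ρ (c ⊗ₜ p) := by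
  rw [entwiningOf_tmul, ← h.apply_smul hs, smul_tmul', smul_eq_mul, mul_one]

theorem entwinedAction_entwiningOf (hs : Function.Surjective (canLift δ))
    (h : IsCanAction δ ρ) : entwinedAction (mul' k P) (entwiningOf ρ) = ρ := by
  refine TensorProduct.ext' fun u p => ?_
  induction u using TensorProduct.induction_on with
  | zero => simp
  | add u v hu hv => simp only [add_tmul, map_add, hu, hv]
  | tmul x c => rw [entwinedAction_mul'_tmul, h.apply_tmul_tmul hs]

theorem rTensor_delta_apply (hs : Function.Surjective (canLift δ)) (h : IsCanAction δ ρ)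
    (v : P ⊗[k] C) (p : P) :
    rTensor C δ (ρ (v ⊗ₜ p)) = entwinedAction ρ (entwiningOf ρ) (rTensor C δ v ⊗ₜ p) := by
  induction v using TensorProduct.induction_on with
  | zero => simp
  | add v w hv hw => simp only [add_tmul, map_add, hv, hw]
  | tmul x c =>
    rw [h.apply_tmul_tmul hs, rTensor_tmul, entwinedAction_tmul]
    induction entwiningOf ρ (c ⊗ₜ p) using TensorProduct.induction_on with
    | zero => simp
    | add v w hv hw => simp only [smul_add, tmul_add, map_add, hv, hw]
    | tmul q d => simp [smul_tmul', h.apply_delta]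

theorem isEntwinedOn (hs : Function.Surjective (canLift δ)) (h : IsCanAction δ ρ) :
    IsEntwinedOn δ (entwiningOf ρ) :=
  isEntwinedOn_iff.2 fun m p => by rw [h.entwinedAction_entwiningOf hs, h.apply_delta]

end IsCanAction

variable [Coalgebra k C]

namespace IsCanAction

variable {δ : P →ₗ[k] P ⊗[k] C} {ρ : (P ⊗[k] C) ⊗[k] P →ₗ[k] P ⊗[k] C}

theorem rid_lTensor_counit_apply (hδ : IsCoaction δ) (hs : Function.Surjective (canLift δ))
    (h : IsCanAction δ ρ) (u : P ⊗[k] C) (p : P) :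
    TensorProduct.rid k P (lTensor P Coalgebra.counit (ρ (u ⊗ₜ p)))
      = TensorProduct.rid k P (lTensor P Coalgebra.counit u) * p := by
  induction u using canLift_induction hs with
  | zero => simp
  | add u v hu hv => simp only [add_tmul, map_add, add_mul, hu, hv]
  | smul_delta a b =>
    rw [h.apply_smul_delta, rid_lTensor_smul, rid_lTensor_smul, hδ.1, hδ.1, mul_assoc]

theorem lTensor_comul_apply (hδ : IsCoaction δ) (hs : Function.Surjective (canLift δ))
    (h : IsCanAction δ ρ) (u : P ⊗[k] C) (p : P) :
    (TensorProduct.assoc k P C C).symm (lTensor P Coalgebra.comul (ρ (u ⊗ₜ p)))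
      = entwinedAction ρ (entwiningOf ρ)
          ((TensorProduct.assoc k P C C).symm (lTensor P Coalgebra.comul u) ⊗ₜ p) := by
  induction u using canLift_induction hs with
  | zero => simp
  | add u v hu hv => simp only [add_tmul, map_add, hu, hv]
  | smul_delta a b =>
    rw [h.apply_smul_delta, assoc_symm_lTensor_smul, assoc_symm_lTensor_smul, ← hδ.2, ← hδ.2,
      ← h.apply_delta, h.rTensor_delta_apply hs, entwinedAction_smul (h.apply_smul hs)]

theorem isEntwining (hδ : IsCoaction δ) (hs : Function.Surjective (canLift δ))
    (h : IsCanAction δ ρ) : IsEntwining (entwiningOf ρ) := by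
  refine ⟨?mul, fun c => h.apply_tmul_one hs _, ?comul, ?counit⟩
  case mul =>
    refine TensorProduct.ext_threefold' fun c p p' => ?_
    show entwiningOf ρ (c ⊗ₜ (p * p'))
      = entwinedAction (mul' k P) (entwiningOf ρ) (entwiningOf ρ (c ⊗ₜ p) ⊗ₜ p')
    rw [h.entwinedAction_entwiningOf hs, entwiningOf_tmul, entwiningOf_tmul, h.apply_tmul_mul hs]
  case comul =>
    refine TensorProduct.ext' fun c p => (TensorProduct.assoc k P C C).symm.injective ?_
    simp only [comp_apply, LinearEquiv.coe_coe, rTensor_tmul, LinearEquiv.symm_apply_apply]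
    rw [entwiningOf_tmul, h.lTensor_comul_apply hδ hs, lTensor_tmul]
    induction (Coalgebra.comul c : C ⊗[k] C) using TensorProduct.induction_on with
    | zero => simp
    | add v w hv hw => simp only [tmul_add, add_tmul, map_add, hv, hw]
    | tmul c₁ c₂ =>
      rw [TensorProduct.assoc_symm_tmul, entwinedAction_tmul, TensorProduct.assoc_tmul,
        lTensor_tmul]
      induction entwiningOf ρ (c₂ ⊗ₜ p) using TensorProduct.induction_on with
      | zero => simp
      | add v w hv hw => simp only [tmul_add, map_add, hv, hw]
      | tmul q d => rfl
  case counit =>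
    refine TensorProduct.ext' fun c p => ?_
    simp only [comp_apply, LinearEquiv.coe_coe, rTensor_tmul, TensorProduct.lid_tmul]
    rw [entwiningOf_tmul, h.rid_lTensor_counit_apply hδ hs]
    simp

end IsCanAction

theorem canonical_entwining_exists_unique
    (δ : P →ₗ[k] P ⊗[k] C) (hδ : IsCoaction δ) (hGal : IsCGalois δ) :
    ∃ ψ : C ⊗[k] P →ₗ[k] P ⊗[k] C,
      (IsEntwining ψ ∧ IsEntwinedOn δ ψ) ∧
      -- the formula ψ(c ⊗ p) = can(τ(c) · p), via any representative t of τ(c):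
      (∀ (c : C) (p : P) (t : P ⊗[k] P),
          canLift δ t = (1 : P) ⊗ₜ[k] c →
          ψ (c ⊗ₜ[k] p) = canLift δ (t * ((1 : P) ⊗ₜ[k] p))) ∧
      -- uniqueness:
      (∀ ψ' : C ⊗[k] P →ₗ[k] P ⊗[k] C,
          IsEntwining ψ' → IsEntwinedOn δ ψ' → ψ' = ψ) := by
  obtain ⟨ρ, hρ⟩ := exists_isCanAction hGal
  refine ⟨entwiningOf ρ, ⟨hρ.isEntwining hδ hGal.1, hρ.isEntwinedOn hGal.1⟩,
    fun c p t ht => ?_, fun ψ' _ hψ' => ?_⟩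
  · rw [entwiningOf_tmul, ← ht, hρ]
  · rw [← entwiningOf_entwinedAction ψ', (isCanAction_entwinedAction hψ').unique hGal.1 hρ]

end CGal
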